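/- arXiv:2501.03636 — 2 statements merged into one kernel-verified Lean document; each statement's English description precedes it below -/
import Mathlib

section
/- Let L be the free Lie algebra on x, y over a field of characteristic 0 and δ the derivation with δ(x)=0, δ(y)=x. If f = ∑_{j=0}^{k} α_j [y,x,x^{(j)},y,x^{(k-j)}] (left-normed, with x^{(m)} meaning m copies of x) satisfies δ(f) = 0, then ∑_{j=0}^{k} α_j = 0. -/
/-!
A derivation with `δ x = 0` commutes with `adRight x`. Since `δ [y, x] = [x, x] = 0`, it kills
`[y, x, x^{(j)}]` and sends each monomial `[y, x, x^{(j)}, y, x^{(k-j)}]` to `[y, x^{(k+2)}]`, so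
`δ f = (∑ α_j) • [y, x^{(k+2)}]`. This last element is nonzero: in the representation of the free
Lie algebra on `K[X]` given by `x ↦ -d/dX`, `y ↦ X ^ (k+2)` it acts on `1` as `(k+2)!`.
-/

/-- Left-normed iterated bracketing by `x`: `adRight x n u = [u, x, ..., x]` (n copies of x). -/
def adRight {L : Type*} [LieRing L] (x : L) : ℕ → L → L
  | 0, u => u
  | n + 1, u => ⁅adRight x n u, x⁆

section LieRing

variable {L : Type*} [LieRing L]

lemma adRight_succ (x u : L) (n : ℕ) : adRight x (n + 1) u = ⁅adRight x n u, x⁆ := rfl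

lemma adRight_adRight (x u : L) (m n : ℕ) :
    adRight x m (adRight x n u) = adRight x (n + m) u := by
  induction m with
  | zero => rfl
  | succ m ih => rw [adRight_succ, ih, ← Nat.add_assoc, adRight_succ]

@[simp]
lemma adRight_zero (x : L) (n : ℕ) : adRight x n 0 = 0 := by
  induction n with
  | zero => rfl
  | succ n ih => rw [adRight_succ, ih, zero_lie]

lemma map_adRight_of_leibniz (δ : L → L) (hδ : ∀ a b, δ ⁅a, b⁆ = ⁅δ a, b⁆ + ⁅a, δ b⁆)
    {x : L} (hx : δ x = 0) (n : ℕ) (u : L) : δ (adRight x n u) = adRight x n (δ u) := by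
  induction n with
  | zero => rfl
  | succ n ih => rw [adRight_succ, hδ, hx, lie_zero, add_zero, ih, adRight_succ]

lemma map_adRight_lie_adRight_lie_of_leibniz (δ : L → L)
    (hδ : ∀ a b, δ ⁅a, b⁆ = ⁅δ a, b⁆ + ⁅a, δ b⁆) {x y : L} (hx : δ x = 0) (hy : δ y = x)
    {j k : ℕ} (hjk : j ≤ k) :
    δ (adRight x (k - j) ⁅adRight x j ⁅y, x⁆, y⁆) = adRight x (k + 2) y := by
  have hyx : δ ⁅y, x⁆ = 0 := by rw [hδ, hy, hx, lie_self, lie_zero, add_zero]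
  rw [map_adRight_of_leibniz δ hδ hx, hδ, map_adRight_of_leibniz δ hδ hx, hyx, hy, adRight_zero,
    zero_lie, zero_add, ← adRight_succ, show ⁅y, x⁆ = adRight x 1 y from rfl,
    adRight_adRight, adRight_adRight]
  congr 1
  omega

end LieRing

lemma LieHom.map_adRight {R L L' : Type*} [CommRing R] [LieRing L] [LieAlgebra R L] [LieRing L']
    [LieAlgebra R L'] (ρ : L →ₗ⁅R⁆ L') (x u : L) (n : ℕ) :
    ρ (adRight x n u) = adRight (ρ x) n (ρ u) := by
  induction n with
  | zero => rfl
  | succ n ih => rw [adRight_succ, ρ.map_lie, ih, adRight_succ]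

namespace Polynomial

attribute [local instance] LieRing.ofAssociativeRing

variable {R : Type*} [CommRing R]

lemma lie_mulLeft_neg_derivative (f : R[X]) :
    ⁅LinearMap.mulLeft R f, -(derivative : Module.End R R[X])⁆ =
      LinearMap.mulLeft R (derivative f) := by
  refine LinearMap.ext fun p => ?_
  simp only [Ring.lie_def, LinearMap.sub_apply, Module.End.mul_apply, LinearMap.neg_apply,
    LinearMap.mulLeft_apply, map_neg, derivative_mul]
  ring

lemma adRight_neg_derivative_mulLeft (f : R[X]) (n : ℕ) :
    adRight (-(derivative : Module.End R R[X])) n (LinearMap.mulLeft R f) =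
      LinearMap.mulLeft R (derivative^[n] f) := by
  induction n with
  | zero => rfl
  | succ n ih =>
    rw [adRight_succ, ih, lie_mulLeft_neg_derivative, Function.iterate_succ_apply']

end Polynomial

attribute [local instance] LieRing.ofAssociativeRing in
open Polynomial Nat in
lemma FreeLieAlgebra.adRight_of_of_ne_zero {R ι : Type*} [CommRing R] [CharZero R] {i j : ι}
    (hij : i ≠ j) (n : ℕ) : adRight (of R i) n (of R j) ≠ 0 := by
  classical
  let ρ := lift R fun l : ι => if l = i then -(derivative : Module.End R R[X])
    else LinearMap.mulLeft R (X ^ n)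
  have hρ : ρ (adRight (of R i) n (of R j)) 1 = (n ! : R[X]) := by
    simp [ρ, LieHom.map_adRight, if_neg hij.symm, adRight_neg_derivative_mulLeft,
      iterate_derivative_X_pow_eq_natCast_mul, Nat.descFactorial_self]
  intro h
  rw [h, map_zero, LinearMap.zero_apply, eq_comm, Nat.cast_eq_zero] at hρ
  exact n.factorial_ne_zero hρ

theorem degree_two_in_y_constant_coeff_sum {K : Type*} [Field K] [CharZero K]
    (δ : FreeLieAlgebra K (Fin 2) →ₗ[K] FreeLieAlgebra K (Fin 2))
    (hδ : ∀ a b : FreeLieAlgebra K (Fin 2), δ ⁅a, b⁆ = ⁅δ a, b⁆ + ⁅a, δ b⁆)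
    (hx : δ (FreeLieAlgebra.of K (0 : Fin 2)) = 0)
    (hy : δ (FreeLieAlgebra.of K (1 : Fin 2)) = FreeLieAlgebra.of K (0 : Fin 2))
    (k : ℕ) (α : ℕ → K) (f : FreeLieAlgebra K (Fin 2))
    (hf : f = ∑ j ∈ Finset.range (k + 1),
      α j • adRight (FreeLieAlgebra.of K (0 : Fin 2)) (k - j)
        ⁅adRight (FreeLieAlgebra.of K (0 : Fin 2)) j
          ⁅FreeLieAlgebra.of K (1 : Fin 2), FreeLieAlgebra.of K (0 : Fin 2)⁆, FreeLieAlgebra.of K (1 : Fin 2)⁆)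
    (h : δ f = 0) :
    ∑ j ∈ Finset.range (k + 1), α j = 0 := by
  have hδf : δ f = (∑ j ∈ Finset.range (k + 1), α j) •
      adRight (FreeLieAlgebra.of K 0) (k + 2) (FreeLieAlgebra.of K 1) := by
    rw [hf, map_sum, Finset.sum_smul]
    refine Finset.sum_congr rfl fun j hj => ?_
    rw [map_smul,
      map_adRight_lie_adRight_lie_of_leibniz δ hδ hx hy (Finset.mem_range_succ_iff.mp hj)]
  rw [h, eq_comm, smul_eq_zero] at hδf
  exact hδf.resolve_right (FreeLieAlgebra.adRight_of_of_ne_zero (by decide) _)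
end

section
/- In the free Lie algebra on x, y over a field of characteristic 0 with δ(x)=0, δ(y)=x: if α·[y,x,y,y] is a constant of δ (i.e., δ(α[y,x,y,y]) = 0 with left-normed brackets), then α = 0. -/
/-!
Since `δ` kills `⁅y, x⁆`, the Leibniz rule gives `δ [y,x,y,y] = [y,x,x,y] + [y,x,y,x]`. This is
nonzero: in the algebra of noncommutative polynomials in `x, y` it becomes
`2 (xxyy - 2 xyxy + 2 yxyx - yyxx)`, whose coefficient of `xxyy` is `2 ≠ 0`.
-/

theorem map_lie_lie_lie_of_leibniz {L : Type*} [LieRing L] (δ : L → L)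
    (hδ : ∀ a b : L, δ ⁅a, b⁆ = ⁅δ a, b⁆ + ⁅a, δ b⁆) {x y : L} (hx : δ x = 0) (hy : δ y = x) :
    δ ⁅⁅⁅y, x⁆, y⁆, y⁆ = ⁅⁅⁅y, x⁆, x⁆, y⁆ + ⁅⁅⁅y, x⁆, y⁆, x⁆ := by
  simp only [hδ, hx, hy, lie_self, lie_zero, add_zero, zero_lie, zero_add]

attribute [local instance 100] LieRing.ofAssociativeRing

namespace FreeLieAlgebra

variable (R X : Type*) [CommRing R]

noncomputable def toMonoidAlgebra : FreeLieAlgebra R X →ₗ⁅R⁆ MonoidAlgebra R (FreeMonoid X) :=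
  lift R fun i => MonoidAlgebra.single (FreeMonoid.of i) 1

variable {R X}

@[simp]
theorem toMonoidAlgebra_of (i : X) :
    toMonoidAlgebra R X (of R i) = MonoidAlgebra.single (FreeMonoid.of i) 1 :=
  lift_of_apply _ _

theorem coeff_toMonoidAlgebra_lie_lie_lie_add_lie_lie_lie {a b : X} (hab : a ≠ b) :
    (toMonoidAlgebra R X
      (⁅⁅⁅of R b, of R a⁆, of R a⁆, of R b⁆ + ⁅⁅⁅of R b, of R a⁆, of R b⁆, of R a⁆)).coeff
        (FreeMonoid.of a * FreeMonoid.of a * FreeMonoid.of b * FreeMonoid.of b) = 2 := by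
  classical
  simp only [map_add, LieHom.map_lie, toMonoidAlgebra_of, Ring.lie_def, sub_mul, mul_sub,
    MonoidAlgebra.single_mul_single, one_mul, mul_assoc, MonoidAlgebra.coeff_add,
    MonoidAlgebra.coeff_sub, MonoidAlgebra.coeff_single, Finsupp.add_apply, Finsupp.sub_apply,
    Finsupp.single_apply, ← FreeMonoid.toList.apply_eq_iff_eq, FreeMonoid.toList_of_mul,
    FreeMonoid.toList_of, List.cons.injEq, hab, hab.symm, and_false, and_true, if_true,
    if_false]
  norm_num

theorem lie_lie_lie_add_lie_lie_lie_ne_zero [NeZero (2 : R)] {a b : X} (hab : a ≠ b) :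
    ⁅⁅⁅of R b, of R a⁆, of R a⁆, of R b⁆ + ⁅⁅⁅of R b, of R a⁆, of R b⁆, of R a⁆ ≠ 0 := by
  intro h
  have := coeff_toMonoidAlgebra_lie_lie_lie_add_lie_lie_lie (R := R) hab
  rw [h, map_zero, MonoidAlgebra.coeff_zero, Finsupp.zero_apply] at this
  exact two_ne_zero this.symm

end FreeLieAlgebra

theorem degree_four_monomial_not_constant {K : Type*} [Field K] [CharZero K]
    (δ : FreeLieAlgebra K (Fin 2) →ₗ[K] FreeLieAlgebra K (Fin 2))
    (hδ : ∀ a b : FreeLieAlgebra K (Fin 2), δ ⁅a, b⁆ = ⁅δ a, b⁆ + ⁅a, δ b⁆)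
    (hx : δ (FreeLieAlgebra.of K (0 : Fin 2)) = 0)
    (hy : δ (FreeLieAlgebra.of K (1 : Fin 2)) = FreeLieAlgebra.of K (0 : Fin 2))
    (α : K)
    (h : δ (α • ⁅⁅⁅FreeLieAlgebra.of K (1 : Fin 2), FreeLieAlgebra.of K (0 : Fin 2)⁆,
      FreeLieAlgebra.of K (1 : Fin 2)⁆, FreeLieAlgebra.of K (1 : Fin 2)⁆) = 0) :
    α = 0 := by
  rw [map_smul, map_lie_lie_lie_of_leibniz δ hδ hx hy] at h
  exact (smul_eq_zero.mp h).resolve_right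
    (FreeLieAlgebra.lie_lie_lie_add_lie_lie_lie_ne_zero (by decide))
end
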